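/- arXiv:1207.1197 — 2 statements merged into one kernel-verified Lean document; each statement's English description precedes it below -/
import Mathlib

section
/- For density matrices ρ and σ with supp(σ) ⊇ supp(ρ) (so that the relative entropy is finite), -log Tr(ρ^{1/2} σ^{1/2}) ≤ (1/2) Tr ρ(log ρ - log σ). That is, -log Q(ρ,σ) ≤ S(ρ‖σ)/2. -/
open Matrix
open scoped ComplexOrder

/-- The positive semidefinite square root (removed from Mathlib; restated with its old definition). -/
noncomputable def Matrix.PosSemidef.sqrt {n : Type*} [Fintype n] [DecidableEq n] {𝕜 : Type*} [RCLike 𝕜]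
    {A : Matrix n n 𝕜} (hA : A.PosSemidef) : Matrix n n 𝕜 :=
  hA.1.eigenvectorUnitary.1 * diagonal ((↑) ∘ (√·) ∘ hA.1.eigenvalues) *
  (star hA.1.eigenvectorUnitary : Matrix n n 𝕜)

/-- Trace norm `‖X‖₁ = Tr √(XᴴX)`. -/
noncomputable def traceNorm {n : Type*} [Fintype n] [DecidableEq n] (X : Matrix n n ℂ) : ℝ :=
  ((Matrix.posSemidef_conjTranspose_mul_self X).sqrt.trace).re

/-- Fractional power `A^s` of a positive semidefinite matrix, defined spectrally with the
convention `0 ^ s = 0` for all real `s`. -/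
noncomputable def Matrix.PosSemidef.rpow {n : Type*} [Fintype n] [DecidableEq n]
    {A : Matrix n n ℂ} (hA : A.PosSemidef) (s : ℝ) : Matrix n n ℂ :=
  hA.1.cfc (fun x => if x = 0 then 0 else x ^ s)

/-- Matrix logarithm of a positive semidefinite matrix, defined spectrally with the
convention `log 0 = 0` on the kernel. -/
noncomputable def Matrix.PosSemidef.log {n : Type*} [Fintype n] [DecidableEq n]
    {A : Matrix n n ℂ} (hA : A.PosSemidef) : Matrix n n ℂ :=
  hA.1.cfc Real.log

/-!
Write ρ = ∑ pᵢ |aᵢ⟩⟨aᵢ| and σ = ∑ qⱼ |bⱼ⟩⟨bⱼ| and let cᵢⱼ = |⟨aᵢ, bⱼ⟩|², a doubly stochastic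
matrix. Then Q(ρ,σ) = ∑ √(P Q) and S(ρ‖σ) = ∑ P (log P - log Q) for the Nussbaum–Szkoła
distributions P(i,j) = pᵢ cᵢⱼ and Q(i,j) = qⱼ cᵢⱼ, and `supp ρ ⊆ supp σ` gives `Q = 0 → P = 0`.
The classical bound `-log ∑ √(P Q) ≤ D(P‖Q) / 2` is Jensen's inequality for `log`, applied to
`√(Q / P)` under `P`.
-/

theorem Real.sum_mul_log_le_log_sum_mul {ι : Type*} (s : Finset ι) (w z : ι → ℝ)
    (hw : ∀ i ∈ s, 0 ≤ w i) (hw1 : ∑ i ∈ s, w i = 1) (hz : ∀ i ∈ s, 0 ≤ z i)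
    (hwz : ∀ i ∈ s, z i = 0 → w i = 0) :
    ∑ i ∈ s, w i * Real.log (z i) ≤ Real.log (∑ i ∈ s, w i * z i) := by
  have hpow : ∀ i ∈ s, 0 < z i ^ w i ∧ Real.log (z i ^ w i) = w i * Real.log (z i) := by
    intro i hi
    rcases (hz i hi).eq_or_lt with hzi | hzi
    · simp [← hzi, hwz i hi hzi.symm]
    · exact ⟨Real.rpow_pos_of_pos hzi _, Real.log_rpow hzi _⟩
  calc ∑ i ∈ s, w i * Real.log (z i) = Real.log (∏ i ∈ s, z i ^ w i) := by
        rw [Real.log_prod fun i hi => (hpow i hi).1.ne']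
        exact Finset.sum_congr rfl fun i hi => (hpow i hi).2.symm
    _ ≤ Real.log (∑ i ∈ s, w i * z i) :=
        Real.log_le_log (Finset.prod_pos fun i hi => (hpow i hi).1)
          (Real.geom_mean_le_arith_mean_weighted s w z hw hw1 hz)

theorem Real.neg_log_sum_sqrt_mul_sqrt_le {ι : Type*} [Fintype ι] (P Q : ι → ℝ)
    (hP : ∀ k, 0 ≤ P k) (hQ : ∀ k, 0 ≤ Q k) (hP1 : ∑ k, P k = 1)
    (hPQ : ∀ k, Q k = 0 → P k = 0) :
    -Real.log (∑ k, √(P k) * √(Q k))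
      ≤ (1 / 2) * ∑ k, P k * (Real.log (P k) - Real.log (Q k)) := by
  have hjensen := Real.sum_mul_log_le_log_sum_mul Finset.univ P (fun k => √(Q k / P k))
    (fun k _ => hP k) hP1 (fun k _ => Real.sqrt_nonneg _) fun k _ hk => by
      rcases div_eq_zero_iff.mp (Real.sqrt_eq_zero (div_nonneg (hQ k) (hP k)) |>.mp hk) with h | h
      exacts [hPQ k h, h]
  have hmean : ∀ k, P k * √(Q k / P k) = √(P k) * √(Q k) := by
    intro k
    rcases (hP k).eq_or_lt with hPk | hPk
    · simp [← hPk]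
    · rw [Real.sqrt_div' _ (hP k), mul_div_assoc', div_eq_iff (Real.sqrt_pos.2 hPk).ne',
        mul_right_comm, Real.mul_self_sqrt (hP k)]
  have hlog : ∀ k, P k * Real.log √(Q k / P k)
      = -(1 / 2) * (P k * (Real.log (P k) - Real.log (Q k))) := by
    intro k
    by_cases hPk : P k = 0
    · simp [hPk]
    have hQk : Q k ≠ 0 := fun h => hPk (hPQ k h)
    rw [Real.log_sqrt (div_nonneg (hQ k) (hP k)), Real.log_div hQk hPk]
    ring
  simp only [hmean, hlog, ← Finset.mul_sum] at hjensen
  linarith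

theorem Real.neg_log_sum_sqrt_mul_sqrt_mul_le {ι κ : Type*} [Fintype ι] [Fintype κ]
    (p : ι → ℝ) (q : κ → ℝ) (c : ι → κ → ℝ)
    (hp : ∀ i, 0 ≤ p i) (hq : ∀ j, 0 ≤ q j) (hc : ∀ i j, 0 ≤ c i j)
    (hp1 : ∑ i, p i = 1) (hc1 : ∀ i, ∑ j, c i j = 1)
    (hpq : ∀ i j, q j = 0 → p i * c i j = 0) :
    -Real.log (∑ i, ∑ j, √(p i) * √(q j) * c i j)
      ≤ (1 / 2) * (∑ i, p i * Real.log (p i) - ∑ i, ∑ j, p i * Real.log (q j) * c i j) := by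
  -- the Nussbaum–Szkoła pair on `ι × κ`
  have hmain := Real.neg_log_sum_sqrt_mul_sqrt_le (fun x : ι × κ => p x.1 * c x.1 x.2)
    (fun x => q x.2 * c x.1 x.2) (fun x => mul_nonneg (hp _) (hc _ _))
    (fun x => mul_nonneg (hq _) (hc _ _))
    (by simp only [Fintype.sum_prod_type, ← Finset.mul_sum, hc1, mul_one, hp1])
    fun x hx => (mul_eq_zero.mp hx).elim (hpq x.1 x.2) fun h => by simp [h]
  have hmean : ∀ i j, √(p i * c i j) * √(q j * c i j) = √(p i) * √(q j) * c i j := fun i j => by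
    rw [Real.sqrt_mul (hp i), Real.sqrt_mul (hq j), mul_mul_mul_comm,
      Real.mul_self_sqrt (hc i j)]
  have hlog : ∀ i j, p i * c i j * (Real.log (p i * c i j) - Real.log (q j * c i j))
      = p i * Real.log (p i) * c i j - p i * Real.log (q j) * c i j := fun i j => by
    by_cases hpc : p i * c i j = 0
    · rcases mul_eq_zero.mp hpc with h | h <;> simp [h]
    have hqj : q j ≠ 0 := fun h => hpc (hpq i j h)
    obtain ⟨hpi, hcij⟩ := mul_ne_zero_iff.mp hpc
    rw [Real.log_mul hpi hcij, Real.log_mul hqj hcij]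
    ring
  simp only [Fintype.sum_prod_type, hmean, hlog, Finset.sum_sub_distrib, ← Finset.mul_sum,
    hc1, mul_one] at hmain
  exact hmain

namespace Matrix.IsHermitian

variable {n : Type*} [Fintype n] [DecidableEq n] {A B : Matrix n n ℂ}

noncomputable def eigenOverlap (hA : A.IsHermitian) (hB : B.IsHermitian) (i j : n) : ℝ :=
  Complex.normSq ((star (hA.eigenvectorUnitary : Matrix n n ℂ) * hB.eigenvectorUnitary) i j)

theorem sum_eigenOverlap_eq_one (hA : A.IsHermitian) (hB : B.IsHermitian) (i : n) :
    ∑ j, hA.eigenOverlap hB i j = 1 := by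
  set U : Matrix n n ℂ := (hA.eigenvectorUnitary : Matrix n n ℂ)
  set V : Matrix n n ℂ := (hB.eigenvectorUnitary : Matrix n n ℂ)
  have hW : star U * V * star (star U * V) = 1 := by
    rw [star_mul, star_star, Matrix.mul_assoc, ← Matrix.mul_assoc V,
      Unitary.mul_star_self_of_mem hB.eigenvectorUnitary.2, Matrix.one_mul,
      Unitary.star_mul_self_of_mem hA.eigenvectorUnitary.2]
  have hii := congrFun (congrFun hW i) i
  simp only [mul_apply, star_apply, RCLike.star_def, Complex.mul_conj, one_apply_eq] at hii
  exact_mod_cast hii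

theorem eigenOverlap_self (hA : A.IsHermitian) (i j : n) :
    hA.eigenOverlap hA i j = if i = j then 1 else 0 := by
  simp [eigenOverlap, one_apply, apply_ite Complex.normSq]

protected theorem cfc_id (hA : A.IsHermitian) : hA.cfc id = A :=
  (hA.cfc_eq id).symm.trans (_root_.cfc_id ℝ A hA.isSelfAdjoint)

theorem trace_cfc_mul_cfc (hA : A.IsHermitian) (hB : B.IsHermitian) (f g : ℝ → ℝ) :
    (hA.cfc f * hB.cfc g).trace =
      ((∑ i, ∑ j, f (hA.eigenvalues i) * g (hB.eigenvalues j) * hA.eigenOverlap hB i j : ℝ) :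
        ℂ) := by
  simp only [eigenOverlap]
  set U : Matrix n n ℂ := (hA.eigenvectorUnitary : Matrix n n ℂ)
  set V : Matrix n n ℂ := (hB.eigenvectorUnitary : Matrix n n ℂ)
  have hcfc : hA.cfc f * hB.cfc g =
      U * (diagonal (RCLike.ofReal ∘ f ∘ hA.eigenvalues) * (star U * V) *
        diagonal (RCLike.ofReal ∘ g ∘ hB.eigenvalues) * star (star U * V)) * star U := by
    simp only [IsHermitian.cfc, Unitary.conjStarAlgAut_apply, star_mul, star_star,
      Matrix.mul_assoc, Unitary.mul_star_self_of_mem hA.eigenvectorUnitary.2, Matrix.mul_one, U, V]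
  rw [hcfc, trace_mul_cycle, Unitary.star_mul_self_of_mem hA.eigenvectorUnitary.2, Matrix.one_mul]
  generalize star U * V = W
  simp only [trace, diag, mul_apply, diagonal_apply, ite_mul, mul_ite, zero_mul, mul_zero,
    Finset.sum_ite_eq, Finset.sum_ite_eq', Finset.mem_univ, if_true, star_apply,
    Function.comp_apply, RCLike.star_def, RCLike.ofReal_eq_complex_ofReal]
  push_cast
  refine Finset.sum_congr rfl fun i _ => Finset.sum_congr rfl fun j _ => ?_
  rw [← Complex.mul_conj]
  ring

theorem eigenvalues_mul_eigenOverlap_eq_zero (hA : A.IsHermitian) (hB : B.IsHermitian)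
    (hAB : ∀ v, B *ᵥ v = 0 → A *ᵥ v = 0) (i : n) {j : n} (hj : hB.eigenvalues j = 0) :
    hA.eigenvalues i * hA.eigenOverlap hB i j = 0 := by
  rw [eigenOverlap]
  set U : Matrix n n ℂ := (hA.eigenvectorUnitary : Matrix n n ℂ)
  have hAv : A *ᵥ hB.eigenvectorBasis j = 0 := hAB _ (by simp [hB.mulVec_eigenvectorBasis, hj])
  have hdiag : star U * A = diagonal (RCLike.ofReal ∘ hA.eigenvalues) * star U := by
    conv_lhs => rw [hA.spectral_theorem, Unitary.conjStarAlgAut_apply]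
    simp only [← Matrix.mul_assoc, Unitary.coe_star_mul_self, Matrix.one_mul, U]
  have hcol : (star U * hB.eigenvectorUnitary) i j = (star U *ᵥ hB.eigenvectorBasis j) i := by
    rw [← hB.eigenvectorUnitary_mulVec, mulVec_mulVec, mulVec_single_one]; rfl
  have := congrFun (congrArg (star U *ᵥ ·) hAv) i
  rw [mulVec_mulVec, hdiag, ← mulVec_mulVec, mulVec_diagonal, mulVec_zero, ← hcol] at this
  rw [Function.comp_apply] at this
  rcases mul_eq_zero.mp this with h | h
  · simp [RCLike.ofReal_eq_zero.mp h]
  · simp [h]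

theorem trace_mul_cfc (hA : A.IsHermitian) (hB : B.IsHermitian) (g : ℝ → ℝ) :
    (A * hB.cfc g).trace =
      ((∑ i, ∑ j, hA.eigenvalues i * g (hB.eigenvalues j) * hA.eigenOverlap hB i j : ℝ) : ℂ) := by
  simpa only [hA.cfc_id, id] using hA.trace_cfc_mul_cfc hB id g

end Matrix.IsHermitian

theorem Matrix.PosSemidef.sqrt_eq_cfc {n : Type*} [Fintype n] [DecidableEq n] {A : Matrix n n ℂ}
    (hA : A.PosSemidef) : hA.sqrt = hA.1.cfc Real.sqrt := rfl

theorem stmt6_general {n : Type*} [Fintype n] [DecidableEq n]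
    {ρ σ : Matrix n n ℂ} (hρ : ρ.PosSemidef) (hσ : σ.PosSemidef)
    (hρ1 : ρ.trace = 1)
    (hsupp : ∀ v : n → ℂ, σ.mulVec v = 0 → ρ.mulVec v = 0) :
    -Real.log (((hρ.sqrt * hσ.sqrt).trace).re)
      ≤ (1 / 2) * ((ρ * (hρ.log - hσ.log)).trace).re := by
  have hQ : ((hρ.sqrt * hσ.sqrt).trace).re = ∑ i, ∑ j, √(hρ.1.eigenvalues i) *
      √(hσ.1.eigenvalues j) * hρ.1.eigenOverlap hσ.1 i j := by
    rw [hρ.sqrt_eq_cfc, hσ.sqrt_eq_cfc, hρ.1.trace_cfc_mul_cfc, Complex.ofReal_re]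
  have hS : ((ρ * (hρ.log - hσ.log)).trace).re =
      ∑ i, hρ.1.eigenvalues i * Real.log (hρ.1.eigenvalues i) - ∑ i, ∑ j, hρ.1.eigenvalues i *
        Real.log (hσ.1.eigenvalues j) * hρ.1.eigenOverlap hσ.1 i j := by
    rw [Matrix.mul_sub, trace_sub, PosSemidef.log, PosSemidef.log, hρ.1.trace_mul_cfc,
      hρ.1.trace_mul_cfc, Complex.sub_re, Complex.ofReal_re, Complex.ofReal_re]
    simp only [hρ.1.eigenOverlap_self, mul_ite, mul_one, mul_zero, Finset.sum_ite_eq,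
      Finset.mem_univ, if_true]
  have hp1 : ∑ i, hρ.1.eigenvalues i = 1 := by
    have := hρ.1.trace_eq_sum_eigenvalues
    rw [hρ1, RCLike.ofReal_eq_complex_ofReal] at this
    exact_mod_cast this.symm
  rw [hQ, hS]
  exact Real.neg_log_sum_sqrt_mul_sqrt_mul_le _ _ _ hρ.eigenvalues_nonneg hσ.eigenvalues_nonneg
    (fun _ _ => Complex.normSq_nonneg _) hp1 (hρ.1.sum_eigenOverlap_eq_one hσ.1)
    fun i _ hj => hρ.1.eigenvalues_mul_eigenOverlap_eq_zero hσ.1 hsupp i hj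

/-- For density matrices with `supp σ ⊇ supp ρ`:
`-log Tr(ρ^{1/2} σ^{1/2}) ≤ S(ρ‖σ)/2`. -/
theorem stmt6 {n : Type*} [Fintype n] [DecidableEq n]
    {ρ σ : Matrix n n ℂ} (hρ : ρ.PosSemidef) (hσ : σ.PosSemidef)
    (hρ1 : ρ.trace = 1) (hσ1 : σ.trace = 1)
    (hsupp : ∀ v : n → ℂ, σ.mulVec v = 0 → ρ.mulVec v = 0) :
    -Real.log (((hρ.sqrt * hσ.sqrt).trace).re)
      ≤ (1 / 2) * ((ρ * (hρ.log - hσ.log)).trace).re :=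
  stmt6_general hρ hσ hρ1 hsupp
end

section
/- For positive semidefinite matrices A, B with Tr(A+B) = 1, chaining gives 1 - ‖A-B‖₁ ≤ 2‖A^{1/2}B^{1/2}‖₁ ≤ √(1 - ‖A-B‖₁²); i.e., the sandwich bound 1 - T ≤ F ≤ √(1-T²). -/
open Matrix
open scoped ComplexOrder

/-!
Write `T = ‖A - B‖₁` and `F = 2 ‖√A √B‖₁`.

Lower bound (Powers–Størmer). Put `P = √A - √B`, `S = √A + √B` and `C = sign P`. Then
`-S ≤ P ≤ S` and `2 (A - B) = P S + S P`, which give `Tr P² ≤ Tr |P| S = Tr C (A - B) ≤ T`.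
Expanding, `Tr P² = Tr A + Tr B - 2 Re Tr √A √B`, and `Re Tr X ≤ ‖X‖₁`.

Upper bound (Fuchs–van de Graaf). Measure in an orthonormal eigenbasis `(vᵢ)` of `A - B` and
put `aᵢ = ⟪vᵢ, A vᵢ⟫`, `bᵢ = ⟪vᵢ, B vᵢ⟫`, so that `T = ∑ |aᵢ - bᵢ|`. A contraction `W` with
`W* X = |X|` (from the polar decomposition of `X = √A √B`) gives
`‖√A √B‖₁ = Re Tr √B W* √A ≤ ∑ √aᵢ √bᵢ`. Finally Cauchy–Schwarz applied to
`|aᵢ - bᵢ| = |√aᵢ - √bᵢ| (√aᵢ + √bᵢ)` yields `T² + F² ≤ (∑ (aᵢ + bᵢ))² = 1`.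
-/

open scoped MatrixOrder InnerProductSpace

section

variable {n : Type*} [Fintype n] [DecidableEq n]

namespace Matrix

section RCLike

variable {𝕜 : Type*} [RCLike 𝕜]

lemma PosSemidef.sqrt_eq_cfcSqrt {A : Matrix n n 𝕜} (hA : A.PosSemidef) :
    hA.sqrt = CFC.sqrt A := by
  rw [CFC.sqrt_eq_real_sqrt A hA.nonneg, cfcₙ_eq_cfc, hA.1.cfc_eq]
  rfl

lemma continuousOn_spectrum (f : ℝ → ℝ) (X : Matrix n n 𝕜) : ContinuousOn f (spectrum ℝ X) :=
  X.finite_real_spectrum.continuousOn f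

lemma cfc_mul_cfc (f g : ℝ → ℝ) (X : Matrix n n 𝕜) :
    cfc f X * cfc g X = cfc (fun x => f x * g x) X :=
  (cfc_mul f g X (continuousOn_spectrum f X) (continuousOn_spectrum g X)).symm

lemma _root_.IsSelfAdjoint.matrix_cfc_mul_self {X : Matrix n n 𝕜} (hX : IsSelfAdjoint X)
    (f : ℝ → ℝ) : cfc f X * X = cfc (fun x => f x * x) X := by
  conv_lhs => enter [2]; rw [← cfc_id' ℝ X]
  exact cfc_mul_cfc _ _ X

lemma _root_.IsSelfAdjoint.matrix_self_mul_cfc {X : Matrix n n 𝕜} (hX : IsSelfAdjoint X)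
    (f : ℝ → ℝ) : X * cfc f X = cfc (fun x => x * f x) X := by
  conv_lhs => enter [1]; rw [← cfc_id' ℝ X]
  exact cfc_mul_cfc _ _ X

lemma IsHermitian.trace_cfc {X : Matrix n n 𝕜} (hX : X.IsHermitian) (f : ℝ → ℝ) :
    (cfc f X).trace = ∑ i, (f (hX.eigenvalues i) : 𝕜) := by
  rw [hX.cfc_eq, IsHermitian.cfc, Unitary.conjStarAlgAut_apply, trace_mul_cycle,
    Unitary.coe_star_mul_self, one_mul, trace_diagonal]
  rfl

lemma trace_toEuclideanLin (M : Matrix n n 𝕜) :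
    LinearMap.trace 𝕜 _ (toEuclideanLin M) = M.trace := by
  rw [toEuclideanLin_eq_toLin_orthonormal,
    LinearMap.trace_eq_matrix_trace 𝕜 (EuclideanSpace.basisFun n 𝕜).toBasis,
    LinearMap.toMatrix_toLin]

lemma trace_eq_sum_inner {ι : Type*} [Fintype ι] (M : Matrix n n 𝕜)
    (b : OrthonormalBasis ι 𝕜 (EuclideanSpace 𝕜 n)) :
    M.trace = ∑ i, ⟪b i, toEuclideanLin M (b i)⟫_𝕜 := by
  rw [← trace_toEuclideanLin, LinearMap.trace_eq_sum_inner _ b]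

lemma inner_toEuclideanLin_conjTranspose (M : Matrix n n 𝕜) (x y : EuclideanSpace 𝕜 n) :
    ⟪toEuclideanLin Mᴴ x, y⟫_𝕜 = ⟪x, toEuclideanLin M y⟫_𝕜 := by
  rw [toEuclideanLin_conjTranspose_eq_adjoint, LinearMap.adjoint_inner_left]

lemma toEuclideanLin_mul_apply (M N : Matrix n n 𝕜) (x : EuclideanSpace 𝕜 n) :
    toEuclideanLin (M * N) x = toEuclideanLin M (toEuclideanLin N x) := by
  simp [toLpLin_apply, mulVec_mulVec]

lemma IsHermitian.toEuclideanLin_eigenvectorBasis {M : Matrix n n 𝕜} (hM : M.IsHermitian)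
    (j : n) :
    toEuclideanLin M (hM.eigenvectorBasis j) = (hM.eigenvalues j : 𝕜) • hM.eigenvectorBasis j := by
  ext1
  rw [toLpLin_apply, hM.mulVec_eigenvectorBasis]
  simp only [Pi.smul_apply, PiLp.smul_apply, RCLike.real_smul_eq_coe_smul (K := 𝕜)]

lemma IsHermitian.inner_eigenvectorBasis {M : Matrix n n 𝕜} (hM : M.IsHermitian) (j : n) :
    ⟪hM.eigenvectorBasis j, toEuclideanLin M (hM.eigenvectorBasis j)⟫_𝕜 = hM.eigenvalues j := by
  rw [hM.toEuclideanLin_eigenvectorBasis, inner_smul_right, inner_self_eq_norm_sq_to_K,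
    hM.eigenvectorBasis.orthonormal.1 j]
  simp

end RCLike

lemma norm_toEuclideanLin_sq (M : Matrix n n ℂ) (x : EuclideanSpace ℂ n) :
    ‖toEuclideanLin M x‖ ^ 2 = (⟪x, toEuclideanLin (Mᴴ * M) x⟫_ℂ).re := by
  rw [toEuclideanLin_mul_apply, ← inner_toEuclideanLin_conjTranspose, conjTranspose_conjTranspose,
    ← @inner_self_eq_norm_sq ℂ]
  rfl

lemma PosSemidef.re_inner_nonneg {M : Matrix n n ℂ} (hM : M.PosSemidef) (x : EuclideanSpace ℂ n) :
    0 ≤ (⟪x, toEuclideanLin M x⟫_ℂ).re :=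
  (isPositive_toEuclideanLin_iff.mpr hM).re_inner_nonneg_right x

lemma norm_toEuclideanLin_le {W : Matrix n n ℂ} (hW : Wᴴ * W ≤ 1) (v : EuclideanSpace ℂ n) :
    ‖toEuclideanLin W v‖ ≤ ‖v‖ := by
  have h := (nonneg_iff_posSemidef.mp (sub_nonneg.mpr hW)).re_inner_nonneg v
  have h1 : toEuclideanLin (1 : Matrix n n ℂ) v = v := by simp
  rw [map_sub, LinearMap.sub_apply, inner_sub_right, Complex.sub_re,
    ← norm_toEuclideanLin_sq, h1, ← RCLike.re_to_complex, inner_self_eq_norm_sq] at h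
  nlinarith [norm_nonneg (toEuclideanLin W v), norm_nonneg v]

lemma norm_toEuclideanLin_sqrt {A : Matrix n n ℂ} (hA : 0 ≤ A) (v : EuclideanSpace ℂ n) :
    ‖toEuclideanLin (CFC.sqrt A) v‖ = √(⟪v, toEuclideanLin A v⟫_ℂ).re := by
  have h : (CFC.sqrt A)ᴴ = CFC.sqrt A := (CFC.sqrt_nonneg A).isSelfAdjoint
  rw [← Real.sqrt_sq (norm_nonneg _), norm_toEuclideanLin_sq, h, CFC.sqrt_mul_sqrt_self A hA]

end Matrix

lemma traceNorm_eq_re_trace_abs (X : Matrix n n ℂ) : traceNorm X = (CFC.abs X).trace.re := by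
  rw [traceNorm, PosSemidef.sqrt_eq_cfcSqrt]
  rfl

lemma traceNorm_nonneg (X : Matrix n n ℂ) : 0 ≤ traceNorm X := by
  rw [traceNorm_eq_re_trace_abs]
  exact (Complex.nonneg_iff.mp (nonneg_iff_posSemidef.mp (CFC.abs_nonneg X)).trace_nonneg).1

lemma Matrix.IsHermitian.traceNorm_eq_sum_abs_eigenvalues {D : Matrix n n ℂ}
    (hD : D.IsHermitian) : traceNorm D = ∑ i, |hD.eigenvalues i| := by
  rw [traceNorm_eq_re_trace_abs, CFC.abs_eq_cfc_norm D hD, hD.trace_cfc, Complex.re_sum]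
  simp

namespace Matrix

lemma re_trace_mul_nonneg {P Q : Matrix n n ℂ} (hP : 0 ≤ P) (hQ : 0 ≤ Q) :
    0 ≤ (P * Q).trace.re := by
  have hsqrt : (CFC.sqrt P)ᴴ = CFC.sqrt P := (CFC.sqrt_nonneg P).isSelfAdjoint
  have h := ((nonneg_iff_posSemidef.mp hQ).mul_mul_conjTranspose_same (CFC.sqrt P)).trace_nonneg
  rw [hsqrt, trace_mul_cycle, CFC.sqrt_mul_sqrt_self P hP] at h
  exact (Complex.nonneg_iff.mp h).1

lemma IsHermitian.exists_posPart_negPart {D : Matrix n n ℂ} (hD : D.IsHermitian) :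
    ∃ p m : Matrix n n ℂ, 0 ≤ p ∧ 0 ≤ m ∧ p * m = 0 ∧ m * p = 0 ∧ D = p - m ∧
      CFC.abs D = p + m :=
  have hD : IsSelfAdjoint D := hD
  ⟨D⁺, D⁻, CFC.posPart_nonneg D, CFC.negPart_nonneg D, CFC.posPart_mul_negPart D,
    CFC.negPart_mul_posPart D, (CFC.posPart_sub_negPart D).symm, (CFC.posPart_add_negPart D).symm⟩

lemma re_trace_mul_le_traceNorm {C D : Matrix n n ℂ} (hC₁ : -1 ≤ C) (hC₂ : C ≤ 1)
    (hD : D.IsHermitian) : (C * D).trace.re ≤ traceNorm D := by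
  obtain ⟨p, m, hp, hm, -, -, rfl, habs⟩ := hD.exists_posPart_negPart
  have h₁ : 0 ≤ ((1 - C) * p).trace.re := re_trace_mul_nonneg (sub_nonneg.mpr hC₂) hp
  have h₂ : 0 ≤ ((1 + C) * m).trace.re := re_trace_mul_nonneg (neg_le_iff_add_nonneg'.mp hC₁) hm
  rw [traceNorm_eq_re_trace_abs, habs]
  simp only [mul_sub, sub_mul, add_mul, one_mul, trace_sub, trace_add, Complex.sub_re,
    Complex.add_re] at h₁ h₂ ⊢
  linarith

lemma re_trace_mul_self_le_re_trace_abs_mul {P S : Matrix n n ℂ} (hP : P.IsHermitian)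
    (hS₁ : -S ≤ P) (hS₂ : P ≤ S) : (P * P).trace.re ≤ (CFC.abs P * S).trace.re := by
  obtain ⟨p, m, hp, hm, hpm, hmp, rfl, habs⟩ := hP.exists_posPart_negPart
  have h₁ : 0 ≤ (p * (S - (p - m))).trace.re := re_trace_mul_nonneg hp (sub_nonneg.mpr hS₂)
  have h₂ : 0 ≤ (m * (S + (p - m))).trace.re :=
    re_trace_mul_nonneg hm (neg_le_iff_add_nonneg'.mp hS₁)
  rw [habs]
  simp only [mul_sub, mul_add, sub_mul, add_mul, hpm, hmp, trace_sub, trace_add,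
    Complex.sub_re, Complex.add_re, sub_zero, zero_sub, trace_neg, Complex.neg_re] at h₁ h₂ ⊢
  linarith

lemma IsHermitian.cfc_sign_mul_self {P : Matrix n n ℂ} (hP : P.IsHermitian) :
    cfc (fun x : ℝ => (SignType.sign x : ℝ)) P * P = CFC.abs P := by
  have hP : IsSelfAdjoint P := hP
  rw [hP.matrix_cfc_mul_self, CFC.abs_eq_cfc_norm P]
  exact cfc_congr fun x _ => sign_mul_self x

lemma IsHermitian.self_mul_cfc_sign {P : Matrix n n ℂ} (hP : P.IsHermitian) :
    P * cfc (fun x : ℝ => (SignType.sign x : ℝ)) P = CFC.abs P := by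
  have hP : IsSelfAdjoint P := hP
  rw [hP.matrix_self_mul_cfc, CFC.abs_eq_cfc_norm P]
  exact cfc_congr fun x _ => self_mul_sign x

lemma IsHermitian.neg_one_le_cfc_sign {P : Matrix n n ℂ} (hP : P.IsHermitian) :
    -1 ≤ cfc (fun x : ℝ => (SignType.sign x : ℝ)) P := by
  have h := algebraMap_le_cfc (fun x : ℝ => (SignType.sign x : ℝ)) (-1) P
    (fun x _ => by cases SignType.sign x <;> norm_num) (continuousOn_spectrum _ P) hP
  simpa using h

lemma cfc_sign_le_one (P : Matrix n n ℂ) : cfc (fun x : ℝ => (SignType.sign x : ℝ)) P ≤ 1 :=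
  cfc_le_one _ _ fun x _ => by cases SignType.sign x <;> norm_num

theorem re_trace_add_sub_traceNorm_le {A B : Matrix n n ℂ} (hA : 0 ≤ A) (hB : 0 ≤ B) :
    A.trace.re + B.trace.re - traceNorm (A - B) ≤ 2 * (CFC.sqrt A * CFC.sqrt B).trace.re := by
  set a := CFC.sqrt A
  set b := CFC.sqrt B
  have ha : 0 ≤ a := CFC.sqrt_nonneg A
  have hb : 0 ≤ b := CFC.sqrt_nonneg B
  have hP : (a - b).IsHermitian := ha.isSelfAdjoint.sub hb.isSelfAdjoint
  set C := cfc (fun x : ℝ => (SignType.sign x : ℝ)) (a - b)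
  have hCP : C * (a - b) = CFC.abs (a - b) := hP.cfc_sign_mul_self
  have hPC : (a - b) * C = CFC.abs (a - b) := hP.self_mul_cfc_sign
  have hsq : ((a - b) * (a - b)).trace.re = A.trace.re + B.trace.re - 2 * (a * b).trace.re := by
    rw [← CFC.sqrt_mul_sqrt_self A hA, ← CFC.sqrt_mul_sqrt_self B hB]
    simp only [sub_mul, mul_sub, trace_sub, trace_mul_comm b a, Complex.sub_re]
    ring
  have hsym : (A - B) + (A - B) = (a - b) * (a + b) + (a + b) * (a - b) := by
    rw [← CFC.sqrt_mul_sqrt_self A hA, ← CFC.sqrt_mul_sqrt_self B hB]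
    noncomm_ring
  have hCD : (C * (A - B)).trace.re = (CFC.abs (a - b) * (a + b)).trace.re := by
    have h : (C * ((A - B) + (A - B))).trace
        = (C * (a - b) * (a + b)).trace + ((a - b) * C * (a + b)).trace := by
      rw [hsym, mul_add, trace_add, ← mul_assoc, ← mul_assoc, trace_mul_cycle C (a + b)]
    rw [hCP, hPC, mul_add, trace_add] at h
    have h' := congrArg Complex.re h
    simp only [Complex.add_re] at h'
    linarith
  have hle := re_trace_mul_self_le_re_trace_abs_mul (S := a + b) hP
    (neg_le_iff_add_nonneg'.mpr (by convert add_nonneg ha ha using 1; abel))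
    (sub_nonneg.mp (by convert add_nonneg hb hb using 1; abel))
  linarith [re_trace_mul_le_traceNorm hP.neg_one_le_cfc_sign (cfc_sign_le_one (a - b))
    (hA.isSelfAdjoint.sub hB.isSelfAdjoint)]

lemma re_trace_le_traceNorm (X : Matrix n n ℂ) : X.trace.re ≤ traceNorm X := by
  have hN : (Xᴴ * X).IsHermitian := (posSemidef_conjTranspose_mul_self X).1
  set b := hN.eigenvectorBasis
  rw [traceNorm_eq_re_trace_abs, CFC.abs, CFC.sqrt_eq_real_sqrt _ (star_mul_self_nonneg X),
    cfcₙ_eq_cfc, star_eq_conjTranspose, hN.trace_cfc, trace_eq_sum_inner X b, Complex.re_sum,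
    Complex.re_sum]
  refine Finset.sum_le_sum fun j _ => ?_
  calc (⟪b j, toEuclideanLin X (b j)⟫_ℂ).re ≤ ‖b j‖ * ‖toEuclideanLin X (b j)‖ :=
        re_inner_le_norm (𝕜 := ℂ) (b j) (toEuclideanLin X (b j))
    _ = √(hN.eigenvalues j) := by
        rw [b.orthonormal.1 j, one_mul, ← Real.sqrt_sq (norm_nonneg _), norm_toEuclideanLin_sq,
          hN.inner_eigenvectorBasis]
        simp
    _ = _ := by simp

lemma exists_contraction_conjTranspose_mul_eq_abs (X : Matrix n n ℂ) :
    ∃ W : Matrix n n ℂ, Wᴴ * W ≤ 1 ∧ Wᴴ * X = CFC.abs X := by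
  set P := CFC.abs X
  have hP : IsSelfAdjoint P := (CFC.abs_nonneg X).isSelfAdjoint
  have hPP : P * P = Xᴴ * X := CFC.abs_mul_abs X
  -- Since `0⁻¹ = 0`, `G` is the pseudo-inverse of `|X|` and `X * G` is the partial isometry of
  -- the polar decomposition of `X`.
  set G := cfc (fun x : ℝ => x⁻¹) P with hGdef
  have hG : Gᴴ = G := cfc_predicate (fun x : ℝ => x⁻¹) P
  have hGP : G * P * P = P := by
    rw [hGdef, hP.matrix_cfc_mul_self, hP.matrix_cfc_mul_self]
    simp only [inv_mul_mul_self]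
    exact cfc_id' ℝ P
  have hPG : P * G ≤ 1 := by
    rw [hGdef, hP.matrix_self_mul_cfc]
    refine cfc_le_one _ _ fun x _ => ?_
    rcases eq_or_ne x 0 with rfl | hx <;> simp [*]
  refine ⟨X * G, ?_, ?_⟩
  · rwa [conjTranspose_mul, hG, mul_assoc, ← mul_assoc Xᴴ, ← hPP, ← mul_assoc, ← mul_assoc, hGP]
  · rw [conjTranspose_mul, hG, mul_assoc, ← hPP, ← mul_assoc, hGP]

lemma traceNorm_mul_le_sum_norm_mul_norm {ι : Type*} [Fintype ι] (L R : Matrix n n ℂ)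
    (b : OrthonormalBasis ι ℂ (EuclideanSpace ℂ n)) :
    traceNorm (L * R) ≤ ∑ i, ‖toEuclideanLin L (b i)‖ * ‖toEuclideanLin Rᴴ (b i)‖ := by
  obtain ⟨W, hW, hWX⟩ := exists_contraction_conjTranspose_mul_eq_abs (L * R)
  rw [traceNorm_eq_re_trace_abs, ← hWX, ← mul_assoc, trace_mul_comm, ← mul_assoc,
    trace_eq_sum_inner _ b, Complex.re_sum]
  refine Finset.sum_le_sum fun i _ => ?_
  rw [toEuclideanLin_mul_apply, toEuclideanLin_mul_apply, ← inner_toEuclideanLin_conjTranspose,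
    ← inner_toEuclideanLin_conjTranspose, conjTranspose_conjTranspose]
  calc _ ≤ ‖toEuclideanLin W (toEuclideanLin Rᴴ (b i))‖ * ‖toEuclideanLin L (b i)‖ :=
        re_inner_le_norm (𝕜 := ℂ) _ _
    _ ≤ _ := by
      rw [mul_comm]
      exact mul_le_mul_of_nonneg_left (norm_toEuclideanLin_le hW _) (norm_nonneg _)

end Matrix

lemma Finset.sq_sum_abs_sub_add_four_mul_sq_sum_sqrt_mul_le {ι : Type*} (s : Finset ι)
    {a b : ι → ℝ} (ha : ∀ i ∈ s, 0 ≤ a i) (hb : ∀ i ∈ s, 0 ≤ b i) :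
    (∑ i ∈ s, |a i - b i|) ^ 2 + 4 * (∑ i ∈ s, √(a i) * √(b i)) ^ 2 ≤
      (∑ i ∈ s, (a i + b i)) ^ 2 := by
  have hfactor : ∀ i ∈ s, |a i - b i| = |√(a i) - √(b i)| * (√(a i) + √(b i)) := by
    intro i hi
    have h : a i - b i = (√(a i) - √(b i)) * (√(a i) + √(b i)) := by
      linear_combination Real.mul_self_sqrt (hb i hi) - Real.mul_self_sqrt (ha i hi)
    rw [h, abs_mul, abs_of_nonneg (add_nonneg (Real.sqrt_nonneg _) (Real.sqrt_nonneg _))]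
  have hsub : ∑ i ∈ s, |√(a i) - √(b i)| ^ 2 =
      ∑ i ∈ s, (a i + b i) - 2 * ∑ i ∈ s, √(a i) * √(b i) := by
    rw [Finset.mul_sum, ← Finset.sum_sub_distrib]
    refine Finset.sum_congr rfl fun i hi => ?_
    rw [sq_abs, sub_sq, Real.sq_sqrt (ha i hi), Real.sq_sqrt (hb i hi)]
    ring
  have hadd : ∑ i ∈ s, (√(a i) + √(b i)) ^ 2 =
      ∑ i ∈ s, (a i + b i) + 2 * ∑ i ∈ s, √(a i) * √(b i) := by
    rw [Finset.mul_sum, ← Finset.sum_add_distrib]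
    refine Finset.sum_congr rfl fun i hi => ?_
    rw [add_sq, Real.sq_sqrt (ha i hi), Real.sq_sqrt (hb i hi)]
    ring
  have hcs := Finset.sum_mul_sq_le_sq_mul_sq s (fun i => |√(a i) - √(b i)|)
    (fun i => √(a i) + √(b i))
  rw [Finset.sum_congr rfl hfactor]
  rw [hsub, hadd] at hcs
  linarith

theorem Matrix.sq_traceNorm_sub_add_four_mul_sq_traceNorm_sqrt_mul_sqrt_le
    {A B : Matrix n n ℂ} (hA : 0 ≤ A) (hB : 0 ≤ B) :
    traceNorm (A - B) ^ 2 + 4 * traceNorm (CFC.sqrt A * CFC.sqrt B) ^ 2 ≤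
      (A.trace.re + B.trace.re) ^ 2 := by
  have hD : (A - B).IsHermitian := hA.isSelfAdjoint.sub hB.isSelfAdjoint
  set v := hD.eigenvectorBasis
  set a := fun i => (⟪v i, toEuclideanLin A (v i)⟫_ℂ).re
  set b := fun i => (⟪v i, toEuclideanLin B (v i)⟫_ℂ).re
  have hT : traceNorm (A - B) = ∑ i, |a i - b i| := by
    rw [hD.traceNorm_eq_sum_abs_eigenvalues]
    refine Finset.sum_congr rfl fun i _ => congrArg abs ?_
    have h := hD.inner_eigenvectorBasis i
    rw [map_sub, LinearMap.sub_apply, inner_sub_right] at h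
    simp only [a, b, v, ← Complex.sub_re, h]
    simp
  have htr : A.trace.re + B.trace.re = ∑ i, (a i + b i) := by
    rw [trace_eq_sum_inner A v, trace_eq_sum_inner B v, Complex.re_sum, Complex.re_sum,
      Finset.sum_add_distrib]
  have hF : traceNorm (CFC.sqrt A * CFC.sqrt B) ≤ ∑ i, √(a i) * √(b i) := by
    have h : (CFC.sqrt B)ᴴ = CFC.sqrt B := (CFC.sqrt_nonneg B).isSelfAdjoint
    simpa only [h, norm_toEuclideanLin_sqrt hA, norm_toEuclideanLin_sqrt hB] using
      traceNorm_mul_le_sum_norm_mul_norm (CFC.sqrt A) (CFC.sqrt B) v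
  have hcl := Finset.univ.sq_sum_abs_sub_add_four_mul_sq_sum_sqrt_mul_le
    (fun i _ => (nonneg_iff_posSemidef.mp hA).re_inner_nonneg (v i))
    (fun i _ => (nonneg_iff_posSemidef.mp hB).re_inner_nonneg (v i))
  rw [hT, htr]
  nlinarith [pow_le_pow_left₀ (traceNorm_nonneg _) hF 2]

end

/-- Sandwich bound `1 - T ≤ F ≤ √(1 - T²)` for positive semidefinite `A`, `B` with
`Tr A + Tr B = 1`. -/
theorem stmt8 {n : Type*} [Fintype n] [DecidableEq n]
    {A B : Matrix n n ℂ} (hA : A.PosSemidef) (hB : B.PosSemidef)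
    (htr : A.trace + B.trace = 1) :
    1 - traceNorm (A - B) ≤ 2 * traceNorm (hA.sqrt * hB.sqrt) ∧
    2 * traceNorm (hA.sqrt * hB.sqrt) ≤ Real.sqrt (1 - (traceNorm (A - B)) ^ 2) := by
  have htr : A.trace.re + B.trace.re = 1 := by simpa using congrArg Complex.re htr
  rw [hA.sqrt_eq_cfcSqrt, hB.sqrt_eq_cfcSqrt]
  constructor
  · linarith [re_trace_add_sub_traceNorm_le hA.nonneg hB.nonneg,
      re_trace_le_traceNorm (CFC.sqrt A * CFC.sqrt B)]
  · have h := sq_traceNorm_sub_add_four_mul_sq_traceNorm_sqrt_mul_sqrt_le hA.nonneg hB.nonneg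
    rw [htr] at h
    exact Real.le_sqrt_of_sq_le (by linarith)
end
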